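/- No feasible anonymous Groves mechanism welfare dominates an OEL mechanism with index k ∈ {1, ..., n−1}. Specifically, suppose an anonymous Groves mechanism t with t_i(θ) = t_i^{VCG}(θ) + h(θ_{-i}) is feasible, satisfies Σ_i t_i(θ) ≥ Σ_i t_i^{OEL}(θ) for every θ, where t^{OEL} is feasible and has total payment equal to 0 whenever [θ]_k = [θ]_{k+1}. Then h coincides with h^{OEL}, so t = t^{OEL}. -/

import Mathlib

/-- The `k`-th highest element (1-indexed) of a multiset of reals. -/
noncomputable def kthHighest (m : Multiset ℝ) (k : ℕ) : ℝ :=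
  (m.sort (· ≤ ·)).getD (Multiset.card m - k) 0

/-- The multiset of all bids. -/
def allBids {n : ℕ} (θ : Fin n → ℝ) : Multiset ℝ :=
  (Finset.univ.val : Multiset (Fin n)).map θ

/-- The multiset of bids of players other than `i`. -/
def otherBids {n : ℕ} (θ : Fin n → ℝ) (i : Fin n) : Multiset ℝ :=
  ((Finset.univ.erase i).val : Multiset (Fin n)).map θ

/-!
Put `f = h - hOEL`. Feasibility of `h`, welfare dominance and budget balance of the OEL
mechanism at ties give `∑ᵢ f(θ₋ᵢ) = 0` for every profile with `[θ]ₖ = [θ]ₖ₊₁`.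
For `n - 1` bids `A` with `a = [A]ₖ`, the profile `a :: A` is such a tie: each copy of `a`
contributes `f A`, and each bid `x ≠ a` of `A` contributes `f (a :: (A - x))`, where
`a :: (A - x)` still has `a` as its `k`-th highest bid and one bid different from `a` fewer.
By induction on that number those terms vanish, leaving `(count a A + 1) • f A = 0`.
-/

theorem List.Pairwise.apply_getElem_iff_length_sub_le_countP {α : Type*} [Preorder α]
    {l : List α} (hl : l.Pairwise (· ≤ ·)) {p : α → Prop} [DecidablePred p]
    (hp : Monotone p) {i : ℕ} (hi : i < l.length) :
    p l[i] ↔ l.length - i ≤ l.countP p := by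
  have hsplit : l = l.take i ++ l[i] :: l.drop (i + 1) := by simp
  have hsorted := hl
  rw [hsplit, List.pairwise_append, List.pairwise_cons] at hsorted
  obtain ⟨-, ⟨hhigh, -⟩, hlow⟩ := hsorted
  have hcount : l.countP p =
      (l.take i).countP p + (if p l[i] then 1 else 0) + (l.drop (i + 1)).countP p := by
    conv_lhs => rw [hsplit]
    simp only [List.countP_append, List.countP_cons, decide_eq_true_eq]
    omega
  by_cases hpi : p l[i]
  · have hdrop : (l.drop (i + 1)).countP p = l.length - (i + 1) := by
      rw [List.countP_eq_length.2 fun y hy => by simpa using hp (hhigh y hy) hpi,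
        List.length_drop]
    simp only [hpi, if_true, true_iff] at hcount ⊢
    omega
  · have htake : (l.take i).countP p = 0 := List.countP_eq_zero.2 fun x hx hpx =>
      hpi (hp (hlow x hx _ List.mem_cons_self) (by simpa using hpx))
    have := (l.drop (i + 1)).countP_le_length (p := (p ·))
    simp only [hpi, if_false, false_iff, List.length_drop] at hcount this ⊢
    omega

open Multiset

section kthHighest

variable {M : Multiset ℝ} {j : ℕ}

theorem kthHighest_eq_getElem (hj : 1 ≤ j) (hjM : j ≤ card M) :
    kthHighest M j = (M.sort (· ≤ ·))[card M - j]'(by rw [length_sort]; omega) :=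
  List.getD_eq_getElem _ _ _

theorem kthHighest_mem (hj : 1 ≤ j) (hjM : j ≤ card M) : kthHighest M j ∈ M := by
  rw [kthHighest_eq_getElem hj hjM]
  exact (mem_sort _).1 (List.getElem_mem _)

theorem apply_kthHighest_iff {p : ℝ → Prop} [DecidablePred p] (hp : Monotone p)
    (hj : 1 ≤ j) (hjM : j ≤ card M) :
    p (kthHighest M j) ↔ j ≤ M.countP p := by
  have hlen : (M.sort (· ≤ ·)).length = card M := length_sort _
  rw [kthHighest_eq_getElem hj hjM,
    (pairwise_sort M _).apply_getElem_iff_length_sub_le_countP hp, hlen]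
  conv_rhs => rw [← sort_eq M (· ≤ ·), coe_countP]
  omega

theorem kthHighest_eq_iff {a : ℝ} (hj : 1 ≤ j) (hjM : j ≤ card M) :
    kthHighest M j = a ↔ j ≤ M.countP (a ≤ ·) ∧ M.countP (a < ·) < j := by
  rw [le_antisymm_iff, ← not_lt, and_comm, ← not_le (a := j),
    apply_kthHighest_iff (p := (a ≤ ·)) (fun _ _ hxy hax => hax.trans hxy) hj hjM,
    apply_kthHighest_iff (p := (a < ·)) (fun _ _ hxy hax => hax.trans_le hxy) hj hjM]

variable {a : ℝ}

theorem kthHighest_cons_eq (hj : 1 ≤ j) (hjM : j ≤ card M) (h : kthHighest M j = a) :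
    kthHighest (a ::ₘ M) j = a := by
  rw [kthHighest_eq_iff hj hjM] at h
  rw [kthHighest_eq_iff hj (by simp; omega), countP_cons_of_pos (p := (a ≤ ·)) _ le_rfl,
    countP_cons_of_neg (p := (a < ·)) _ (lt_irrefl a)]
  omega

theorem kthHighest_cons_succ_eq (hj : 1 ≤ j) (hjM : j ≤ card M) (h : kthHighest M j = a) :
    kthHighest (a ::ₘ M) (j + 1) = a := by
  rw [kthHighest_eq_iff hj hjM] at h
  rw [kthHighest_eq_iff (by omega) (by simpa using hjM),
    countP_cons_of_pos (p := (a ≤ ·)) _ le_rfl,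
    countP_cons_of_neg (p := (a < ·)) _ (lt_irrefl a)]
  omega

theorem kthHighest_cons_erase_eq (hj : 1 ≤ j) (hjM : j ≤ card M) (h : kthHighest M j = a)
    {x : ℝ} (hx : x ∈ M) :
    kthHighest (a ::ₘ M.erase x) j = a := by
  rw [← cons_erase hx] at h hjM
  rw [kthHighest_eq_iff hj hjM, countP_cons, countP_cons] at h
  rw [kthHighest_eq_iff hj (by simpa using hjM), countP_cons_of_pos (p := (a ≤ ·)) _ le_rfl,
    countP_cons_of_neg (p := (a < ·)) _ (lt_irrefl a)]
  split_ifs at h <;> omega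

end kthHighest

theorem Multiset.sum_map_erase_cons {α β : Type*} [DecidableEq α] [AddCommMonoid β]
    (g : Multiset α → β) (a : α) (A : Multiset α) :
    ((a ::ₘ A).map fun x => g ((a ::ₘ A).erase x)).sum =
      (A.count a + 1) • g A + ((A.filter (· ≠ a)).map fun x => g (a ::ₘ A.erase x)).sum := by
  set F := fun x => g ((a ::ₘ A).erase x)
  have hF_head : F a = g A := congrArg g (erase_cons_head a A)
  have hsplit :
      (A.map F).sum = ((A.filter (· = a)).map F).sum + ((A.filter (· ≠ a)).map F).sum := by
    rw [← sum_add, ← map_add, filter_add_not]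
  have hties : ((A.filter (· = a)).map F).sum = A.count a • g A := by
    rw [filter_eq', map_replicate, sum_replicate, hF_head]
  have hrest :
      (A.filter (· ≠ a)).map F = (A.filter (· ≠ a)).map fun x => g (a ::ₘ A.erase x) :=
    map_congr rfl fun x hx => congrArg g (erase_cons_tail A (mem_filter.1 hx).2.symm)
  rw [map_cons, sum_cons, hsplit, hties, hrest, hF_head, succ_nsmul', add_assoc]

-- `M` is a profile of `N + 1` bids; `M.erase x` is what a bidder bidding `x` sees of the
-- others, so the sum is `∑ᵢ f(θ₋ᵢ)`.
def RebatesVanishAtTies {β : Type*} [AddCommMonoid β] (s : Set ℝ) (N k : ℕ)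
    (f : Multiset ℝ → β) : Prop :=
  ∀ M : Multiset ℝ, card M = N + 1 → (∀ x ∈ M, x ∈ s) →
    kthHighest M k = kthHighest M (k + 1) → (M.map fun x => f (M.erase x)).sum = 0

section RebatesVanishAtTies

variable {β : Type*} [AddCommMonoid β] [IsAddTorsionFree β] {s : Set ℝ} {N k : ℕ}
  {f : Multiset ℝ → β}

theorem RebatesVanishAtTies.eq_zero_of_kthHighest_eq (hf : RebatesVanishAtTies s N k f)
    (hk : 1 ≤ k) (hkN : k ≤ N) {a : ℝ} (ha : a ∈ s) {A : Multiset ℝ} (hA : card A = N)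
    (hAs : ∀ x ∈ A, x ∈ s) (hAk : kthHighest A k = a) : f A = 0 := by
  induction hd : A.countP (· ≠ a) using Nat.strong_induction_on generalizing A with
  | _ d ih =>
  have hkA : k ≤ card A := hA ▸ hkN
  have hsum := hf (a ::ₘ A) (by rw [card_cons, hA]) (by simpa [ha] using hAs)
    (by rw [kthHighest_cons_eq hk hkA hAk, kthHighest_cons_succ_eq hk hkA hAk])
  have hrest : ((A.filter (· ≠ a)).map fun x => f (a ::ₘ A.erase x)).sum = 0 := by
    refine sum_eq_zero fun y hy => ?_
    obtain ⟨x, hx, rfl⟩ := mem_map.1 hy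
    obtain ⟨hxA, hxa⟩ := mem_filter.1 hx
    have hdecr : (a ::ₘ A.erase x).countP (· ≠ a) < d := by
      rw [← hd, ← cons_erase hxA, countP_cons_of_neg (p := (· ≠ a)) _ (not_not.2 rfl),
        countP_cons_of_pos (p := (· ≠ a)) _ hxa, erase_cons_head]
      omega
    refine ih _ hdecr (by simp [card_erase_of_mem hxA, hA]; omega) ?_
      (kthHighest_cons_erase_eq hk hkA hAk hxA) rfl
    simpa [ha] using fun y hy => hAs y (mem_of_mem_erase hy)
  rw [sum_map_erase_cons, hrest, add_zero] at hsum
  exact nsmul_right_injective (Nat.succ_ne_zero _) (hsum.trans (nsmul_zero _).symm)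

theorem RebatesVanishAtTies.eq_zero (hf : RebatesVanishAtTies s N k f) (hk : 1 ≤ k)
    (hkN : k ≤ N) {A : Multiset ℝ} (hA : card A = N) (hAs : ∀ x ∈ A, x ∈ s) : f A = 0 :=
  hf.eq_zero_of_kthHighest_eq hk hkN (hAs _ (kthHighest_mem hk (hA ▸ hkN))) hA hAs rfl

end RebatesVanishAtTies

section Bids

variable {n : ℕ}

theorem mem_allBids {θ : Fin n → ℝ} {x : ℝ} : x ∈ allBids θ ↔ ∃ i, θ i = x := by
  simp [allBids]

theorem otherBids_eq_erase (θ : Fin n → ℝ) (i : Fin n) :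
    otherBids θ i = (allBids θ).erase (θ i) := by
  have hcons : allBids θ = θ i ::ₘ otherBids θ i := by
    rw [allBids, otherBids, Finset.erase_val, ← map_cons, cons_erase (Finset.mem_univ i)]
  rw [hcons, erase_cons_head]

theorem card_otherBids (θ : Fin n → ℝ) (i : Fin n) : card (otherBids θ i) = n - 1 := by
  simp [otherBids]

theorem sum_otherBids {β : Type*} [AddCommMonoid β] (g : Multiset ℝ → β)
    (θ : Fin n → ℝ) :
    ∑ i, g (otherBids θ i) = ((allBids θ).map fun x => g ((allBids θ).erase x)).sum := by
  simp only [otherBids_eq_erase]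
  rw [Finset.sum_eq_multiset_sum, allBids, map_map]
  rfl

theorem exists_allBids_eq {M : Multiset ℝ} (hM : card M = n) :
    ∃ θ : Fin n → ℝ, allBids θ = M := by
  obtain ⟨l, rfl⟩ : ∃ l : List ℝ, (l : Multiset ℝ) = M := Quotient.exists_rep M
  rw [coe_card] at hM
  subst hM
  exact ⟨fun i => l[i], by simp [allBids]⟩

end Bids

theorem no_welfare_dominance_of_oel_general
    {n m k : ℕ} (hk1 : 1 ≤ k) (hkn : k ≤ n - 1)
    (L U : ℝ)
    (h hOEL : Multiset ℝ → ℝ)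
    -- feasibility of the mechanism given by h
    (hfeas : ∀ θ : Fin n → ℝ, (∀ i, θ i ∈ Set.Icc L U) →
      -(m : ℝ) * kthHighest (allBids θ) (m + 1) + ∑ i, h (otherBids θ i) ≤ 0)
    -- the total OEL payment is 0 whenever the k-th and (k+1)-th highest bids coincide
    (hOELzero : ∀ θ : Fin n → ℝ, (∀ i, θ i ∈ Set.Icc L U) →
      kthHighest (allBids θ) k = kthHighest (allBids θ) (k + 1) →
      -(m : ℝ) * kthHighest (allBids θ) (m + 1) + ∑ i, hOEL (otherBids θ i) = 0)
    -- h's total payment is everywhere at least the OEL total payment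
    (hwelfare : ∀ θ : Fin n → ℝ, (∀ i, θ i ∈ Set.Icc L U) →
      -(m : ℝ) * kthHighest (allBids θ) (m + 1) + ∑ i, hOEL (otherBids θ i) ≤
        -(m : ℝ) * kthHighest (allBids θ) (m + 1) + ∑ i, h (otherBids θ i)) :
    ∀ θ : Fin n → ℝ, (∀ i, θ i ∈ Set.Icc L U) → ∀ i : Fin n,
      h (otherBids θ i) = hOEL (otherBids θ i) := by
  have hties : RebatesVanishAtTies (Set.Icc L U) (n - 1) k fun A => h A - hOEL A := by
    intro M hM hMs htie
    obtain ⟨θ, rfl⟩ := exists_allBids_eq (n := n) (by omega : card M = n)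
    have hθ : ∀ i, θ i ∈ Set.Icc L U := fun i => hMs _ (mem_allBids.2 ⟨i, rfl⟩)
    rw [← sum_otherBids (fun A => h A - hOEL A), Finset.sum_sub_distrib]
    linarith [hfeas θ hθ, hOELzero θ hθ htie, hwelfare θ hθ]
  intro θ hθ i
  refine sub_eq_zero.1 (hties.eq_zero hk1 hkn (card_otherBids θ i) fun x hx => ?_)
  obtain ⟨j, -, rfl⟩ := mem_map.1 hx
  exact hθ j

/-- no feasible anonymous Groves mechanism welfare dominates an
OEL mechanism with index `k ∈ {1, ..., n−1}`.  Anonymous Groves mechanisms are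
given by a function `h` of the multiset `θ_{-i}` of other bids, with total
payment `−m·[θ]_{m+1} + ∑_i h(θ_{-i})` (the total VCG payment being
`−m·[θ]_{m+1}`).  If the mechanism given by `h` is feasible and its total
payment is everywhere at least that of a feasible OEL mechanism `hOEL` with
index `k` (whose total payment vanishes whenever `[θ]_k = [θ]_{k+1}`), then
`h` coincides with `hOEL`, i.e. the two mechanisms are identical. -/
theorem no_welfare_dominance_of_oel
    {n m k : ℕ} (hm0 : 0 < m) (hmn : m < n) (hk1 : 1 ≤ k) (hkn : k ≤ n - 1)
    (L U : ℝ) (hLU : L ≤ U)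
    (h hOEL : Multiset ℝ → ℝ)
    -- feasibility of the mechanism given by h
    (hfeas : ∀ θ : Fin n → ℝ, (∀ i, θ i ∈ Set.Icc L U) →
      -(m : ℝ) * kthHighest (allBids θ) (m + 1) + ∑ i, h (otherBids θ i) ≤ 0)
    -- the OEL mechanism is feasible
    (hOELfeas : ∀ θ : Fin n → ℝ, (∀ i, θ i ∈ Set.Icc L U) →
      -(m : ℝ) * kthHighest (allBids θ) (m + 1) + ∑ i, hOEL (otherBids θ i) ≤ 0)
    -- the total OEL payment is 0 whenever the k-th and (k+1)-th highest bids coincide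
    (hOELzero : ∀ θ : Fin n → ℝ, (∀ i, θ i ∈ Set.Icc L U) →
      kthHighest (allBids θ) k = kthHighest (allBids θ) (k + 1) →
      -(m : ℝ) * kthHighest (allBids θ) (m + 1) + ∑ i, hOEL (otherBids θ i) = 0)
    -- h's total payment is everywhere at least the OEL total payment
    (hwelfare : ∀ θ : Fin n → ℝ, (∀ i, θ i ∈ Set.Icc L U) →
      -(m : ℝ) * kthHighest (allBids θ) (m + 1) + ∑ i, hOEL (otherBids θ i) ≤
        -(m : ℝ) * kthHighest (allBids θ) (m + 1) + ∑ i, h (otherBids θ i)) :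
    ∀ θ : Fin n → ℝ, (∀ i, θ i ∈ Set.Icc L U) → ∀ i : Fin n,
      h (otherBids θ i) = hOEL (otherBids θ i) :=
  no_welfare_dominance_of_oel_general hk1 hkn L U h hOEL hfeas hOELzero hwelfare
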